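/- arXiv:math/0502113 — 2 statements merged into one kernel-verified Lean document; each statement's English description precedes it below -/
import Mathlib

section
/- Let q be a complex number and let n be a positive integer and k an integer with k ≥ 2. Then q^k · k^{n+1} = q·(n+1)·S_{n,q}(k) + q·Σ_{i=0}^{n-1} C(n+1, i)·S_{i,q}(k) + (q − 1)·S_{n+1,q}(k), where S_{m,q}(k) = Σ_{l=0}^{k-1} q^l · l^m and C(n+1, i) denotes the binomial coefficient. -/
theorem q_power_sum_recurrence (q : ℂ) (n : ℕ) (hn : 1 ≤ n) (k : ℕ) (hk : 2 ≤ k) :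
    q ^ k * (k : ℂ) ^ (n + 1) =
      q * (n + 1) * (∑ l ∈ Finset.range k, q ^ l * (l : ℂ) ^ n)
        + q * ∑ i ∈ Finset.range n,
            (Nat.choose (n + 1) i : ℂ) * ∑ l ∈ Finset.range k, q ^ l * (l : ℂ) ^ i
        + (q - 1) * ∑ l ∈ Finset.range k, q ^ l * (l : ℂ) ^ (n + 1) := by
  have tel : q ^ k * (k : ℂ) ^ (n + 1) =
      ∑ l ∈ Finset.range k,
        (q ^ (l + 1) * ((l : ℂ) + 1) ^ (n + 1) - q ^ l * (l : ℂ) ^ (n + 1)) := by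
    have := Finset.sum_range_sub (f := fun l => q ^ l * ((l : ℕ) : ℂ) ^ (n + 1)) k
    simp only [Nat.cast_add, Nat.cast_one] at this
    rw [this]
    simp [zero_pow (Nat.succ_ne_zero n)]
  rw [tel]
  -- rewrite RHS as a single sum over l
  simp only [Finset.mul_sum]
  rw [Finset.sum_comm (s := Finset.range n) (t := Finset.range k)]
  rw [← Finset.sum_add_distrib, ← Finset.sum_add_distrib]
  refine Finset.sum_congr rfl fun l _ => ?_
  have expand : ((l : ℂ) + 1) ^ (n + 1)
      = ∑ i ∈ Finset.range (n + 2), (l : ℂ) ^ i * (Nat.choose (n + 1) i : ℂ) := by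
    rw [add_pow]
    exact Finset.sum_congr rfl fun i _ => by simp
  rw [expand, Finset.sum_range_succ, Finset.sum_range_succ]
  simp only [Nat.choose_self, Nat.choose_succ_self_right, Nat.cast_one, Nat.cast_add,
    Nat.cast_one, mul_one]
  rw [mul_add, mul_add, Finset.mul_sum]
  have hsum : ∑ i ∈ Finset.range n, q ^ (l + 1) * ((l : ℂ) ^ i * (Nat.choose (n + 1) i : ℂ))
      = ∑ i ∈ Finset.range n, q * ((Nat.choose (n + 1) i : ℂ) * (q ^ l * (l : ℂ) ^ i)) := by
    refine Finset.sum_congr rfl fun i _ => ?_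
    ring
  rw [hsum]
  ring
end

section
/- (Theorem B) Let q be a complex number with 0 < |q| < 1 and q not equal to 1, let l be a positive integer, and let k be an integer with k ≥ 2. Define, for x a real (or complex) number, the q-Bernoulli polynomial value B_{l,q}(x) = −(log q)·Σ_{n=0}^∞ q^n·(n+x)^l − l·Σ_{n=0}^∞ q^n·(n+x)^{l−1}, where log denotes the principal complex logarithm (these series converge since |q| < 1). Then q^{−k}·l·S_{l−1,q}(k) + (q^{−k}·log q)·S_{l,q}(k) = B_{l,q}(k) − q^{−k}·B_{l,q}(0); equivalently, q^{−k}·S_{l−1,q}(k) + (q^{−k}·log q)·(S_{l,q}(k)/l) = (B_{l,q}(k) − q^{−k}·B_{l,q}(0))/l. -/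
open Finset

theorem pow_mul_tsum_geometric_mul_add_pow {𝕜 : Type*} [NormedField 𝕜] [CompleteSpace 𝕜]
    {q : 𝕜} (hq : ‖q‖ < 1) (m k : ℕ) :
    q ^ k * ∑' n : ℕ, q ^ n * ((n : 𝕜) + k) ^ m
      = ∑' n : ℕ, q ^ n * (n : 𝕜) ^ m - ∑ n ∈ range k, q ^ n * (n : 𝕜) ^ m := by
  have hsum : Summable fun n : ℕ => q ^ n * (n : 𝕜) ^ m :=
    (summable_pow_mul_geometric_of_norm_lt_one m hq).congr fun n => mul_comm _ _
  rw [← hsum.sum_add_tsum_nat_add k, ← tsum_mul_left]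
  simp only [Nat.cast_add, pow_add, mul_comm (q ^ k), mul_assoc, add_sub_cancel_left]

theorem theorem_B_general (q : ℂ) (hq0 : 0 < ‖q‖) (hq1 : ‖q‖ < 1)
    (l : ℕ) (hl : 1 ≤ l) (k : ℕ)
    (B : ℕ → ℂ → ℂ)
    (hB : ∀ (m : ℕ) (x : ℂ), 1 ≤ m →
      B m x = -(Complex.log q) * (∑' n : ℕ, q ^ n * ((n : ℂ) + x) ^ m)
        - (m : ℂ) * (∑' n : ℕ, q ^ n * ((n : ℂ) + x) ^ (m - 1))) :
    q ^ (-(k : ℤ)) * (l : ℂ) * (∑ n ∈ Finset.range k, q ^ n * (n : ℂ) ^ (l - 1))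
      + (q ^ (-(k : ℤ)) * Complex.log q) * (∑ n ∈ Finset.range k, q ^ n * (n : ℂ) ^ l)
      = B l (k : ℂ) - q ^ (-(k : ℤ)) * B l 0 := by
  have hqk : q ^ (-(k : ℤ)) * q ^ k = 1 := by
    rw [zpow_neg, zpow_natCast, inv_mul_cancel₀ (pow_ne_zero k (norm_pos_iff.mp hq0))]
  have shift := pow_mul_tsum_geometric_mul_add_pow hq1
  rw [hB l k hl, hB l 0 hl]
  simp only [add_zero]
  linear_combination (q ^ (-(k : ℤ)) * Complex.log q) * shift l k
    + (q ^ (-(k : ℤ)) * l) * shift (l - 1) k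
    + (-(Complex.log q) * (∑' n : ℕ, q ^ n * ((n : ℂ) + k) ^ l)
      - l * ∑' n : ℕ, q ^ n * ((n : ℂ) + k) ^ (l - 1)) * hqk

theorem theorem_B (q : ℂ) (hq0 : 0 < ‖q‖) (hq1 : ‖q‖ < 1)
    (hq : q ≠ 1) (l : ℕ) (hl : 1 ≤ l) (k : ℕ) (hk : 2 ≤ k)
    (B : ℕ → ℂ → ℂ)
    (hB : ∀ (m : ℕ) (x : ℂ), 1 ≤ m →
      B m x = -(Complex.log q) * (∑' n : ℕ, q ^ n * ((n : ℂ) + x) ^ m)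
        - (m : ℂ) * (∑' n : ℕ, q ^ n * ((n : ℂ) + x) ^ (m - 1))) :
    q ^ (-(k : ℤ)) * (l : ℂ) * (∑ n ∈ Finset.range k, q ^ n * (n : ℂ) ^ (l - 1))
      + (q ^ (-(k : ℤ)) * Complex.log q) * (∑ n ∈ Finset.range k, q ^ n * (n : ℂ) ^ l)
      = B l (k : ℂ) - q ^ (-(k : ℤ)) * B l 0 :=
  theorem_B_general q hq0 hq1 l hl k B hB
end
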